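/- Let G ≤ 𝕋 be a countable subgroup, (α_t) an enumeration of G, and (δ_t) a sequence of positive reals decreasing to 0 such that for all t: (1) 2δ_t is less than the minimal distance between distinct elements of ⟨α₁,…,α_t⟩_{M_t}, and (2) δ_t + δ_{t+1} is less than the minimal distance between an element of ⟨α₁,…,α_t⟩_{M_t} and an element of ⟨α₁,…,α_{t+1}⟩_{M_{t+1}} \ ⟨α₁,…,α_t⟩_{M_t}. Define V_t := {β : ∃α ∈ ⟨α₁,…,α_t⟩_{M_t}, ‖α−β‖ < δ_t}. Then ⋃_k ⋂_{t≥k} V_t = G. -/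

import Mathlib

/-- `⟨α₁,…,α_t⟩_M`: integer combinations of the first `t` terms of `α` with
coefficients bounded by `M`. -/
def spanM (α : ℕ → AddCircle (1 : ℝ)) (t M : ℕ) : Set (AddCircle (1 : ℝ)) :=
  {x | ∃ k : ℕ → ℤ, (∀ j, |k j| ≤ (M : ℤ)) ∧ x = ∑ j ∈ Finset.range t, k j • α j}

/-!
A point `β` lying within `δ_t` of `⟨α₁,…,α_t⟩_{M_t}` for all `t ≥ k` has a unique approximant
at each level, by the separation (1); by (2) the approximant at level `t + 1` already lies at
level `t`, so all these approximants coincide. Their common value is then within `δ_t → 0` of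
`β`, hence equals `β`, which therefore lies in `G`.
-/

section Separated

variable {X : Type*} [MetricSpace X]

lemma eq_of_dist_lt_of_separated {S : Set X} {r : ℝ}
    (hS : ∀ a ∈ S, ∀ b ∈ S, a ≠ b → 2 * r < dist a b) {a b β : X}
    (ha : a ∈ S) (hb : b ∈ S) (haβ : dist a β < r) (hbβ : dist b β < r) : a = b := by
  by_contra hne
  linarith [hS a ha b hb hne, dist_triangle_right a b β]

lemma mem_of_dist_lt_of_separated {S T : Set X} {r r' : ℝ}
    (hST : ∀ a ∈ S, ∀ b ∈ T \ S, r + r' < dist a b) {a b β : X}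
    (ha : a ∈ S) (hb : b ∈ T) (haβ : dist a β < r) (hbβ : dist b β < r') : b ∈ S := by
  by_contra hbS
  linarith [hST a ha b ⟨hb, hbS⟩, dist_triangle_right a b β]

theorem mem_of_forall_ge_exists_dist_lt {S : ℕ → Set X} {δ : ℕ → ℝ} (hδanti : Antitone δ)
    (hδ0 : Filter.Tendsto δ Filter.atTop (nhds 0))
    (h1 : ∀ t, ∀ a ∈ S t, ∀ b ∈ S t, a ≠ b → 2 * δ t < dist a b)
    (h2 : ∀ t, ∀ a ∈ S t, ∀ b ∈ S (t + 1) \ S t, δ t + δ (t + 1) < dist a b)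
    {β : X} {k : ℕ} (hβ : ∀ t, k ≤ t → ∃ a ∈ S t, dist a β < δ t) : β ∈ S k := by
  obtain ⟨a, haS, haβ⟩ := hβ k le_rfl
  have approximant_eq : ∀ n, ∀ b ∈ S (k + n), dist b β < δ (k + n) → b = a := by
    intro n
    induction n with
    | zero => exact fun b hb hbβ => eq_of_dist_lt_of_separated (h1 k) hb haS hbβ haβ
    | succ n ih =>
      intro b hb hbβ
      obtain ⟨c, hcS, hcβ⟩ := hβ (k + n) (Nat.le_add_right k n)
      have hbS : b ∈ S (k + n) := mem_of_dist_lt_of_separated (h2 (k + n)) hcS hb hcβ hbβ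
      exact ih b hbS (hbβ.trans_le (hδanti (Nat.le_succ _)))
  have haβ_lt : ∀ t, k ≤ t → dist a β < δ t := by
    intro t ht
    obtain ⟨n, rfl⟩ := Nat.exists_eq_add_of_le ht
    obtain ⟨b, hbS, hbβ⟩ := hβ (k + n) ht
    rwa [approximant_eq n b hbS hbβ] at hbβ
  have hdist : dist a β ≤ 0 :=
    ge_of_tendsto hδ0 (Filter.eventually_atTop.2 ⟨k, fun t ht => (haβ_lt t ht).le⟩)
  rwa [← dist_le_zero.1 hdist]

end Separated

lemma spanM_subset {G : AddSubgroup (AddCircle (1 : ℝ))} {α : ℕ → AddCircle (1 : ℝ)}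
    (hα : ∀ j, α j ∈ G) (t M : ℕ) : spanM α t M ⊆ G := by
  rintro _ ⟨k, -, rfl⟩
  exact AddSubgroup.sum_mem G fun j _ => AddSubgroup.zsmul_mem G (hα j) _

lemma apply_mem_spanM (α : ℕ → AddCircle (1 : ℝ)) {s t M : ℕ} (hst : s < t) (hM : 0 < M) :
    α s ∈ spanM α t M := by
  refine ⟨Pi.single s 1, fun j => ?_, ?_⟩
  · rcases eq_or_ne j s with rfl | hj
    · simpa using Nat.one_le_iff_ne_zero.2 hM.ne'
    · simp [hj]
  · rw [Finset.sum_eq_single_of_mem s (Finset.mem_range.2 hst)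
      fun j _ hj => by simp [Pi.single_eq_of_ne hj]]
    simp

theorem stmt_11_general (G : AddSubgroup (AddCircle (1 : ℝ))) (α : ℕ → AddCircle (1 : ℝ))
    (hα : Set.range α = (G : Set (AddCircle (1 : ℝ))))
    (M : ℕ → ℕ) (hMpos : ∀ t, 0 < M t)
    (δ : ℕ → ℝ) (hδpos : ∀ t, 0 < δ t) (hδanti : Antitone δ)
    (hδ0 : Filter.Tendsto δ Filter.atTop (nhds 0))
    (h1 : ∀ t, ∀ a ∈ spanM α t (M t), ∀ a' ∈ spanM α t (M t),
      a ≠ a' → 2 * δ t < ‖a - a'‖)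
    (h2 : ∀ t, ∀ a ∈ spanM α t (M t),
      ∀ a' ∈ spanM α (t + 1) (M (t + 1)) \ spanM α t (M t),
        δ t + δ (t + 1) < ‖a - a'‖)
    (V : ℕ → Set (AddCircle (1 : ℝ)))
    (hV : ∀ t, V t = {β | ∃ a ∈ spanM α t (M t), ‖a - β‖ < δ t}) :
    (⋃ k : ℕ, ⋂ t : ℕ, ⋂ _ : k ≤ t, V t) = (G : Set (AddCircle (1 : ℝ))) := by
  simp only [← dist_eq_norm] at h1 h2 hV
  have hαG : ∀ j, α j ∈ G := Set.range_subset_iff.1 hα.le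
  ext β
  simp only [Set.mem_iUnion, Set.mem_iInter, SetLike.mem_coe, hV, Set.mem_ofPred_eq]
  constructor
  · rintro ⟨k, hk⟩
    exact spanM_subset hαG k (M k) (mem_of_forall_ge_exists_dist_lt hδanti hδ0 h1 h2 hk)
  · intro hβ
    obtain ⟨s, rfl⟩ : β ∈ Set.range α := hα ▸ hβ
    exact ⟨s + 1, fun t ht => ⟨α s, apply_mem_spanM α ht (hMpos t), by simpa using hδpos t⟩⟩

/-- Given an enumeration `(α_t)` of a countable subgroup `G ≤ 𝕋`, increasing positive
`(M_t)`, and `(δ_t)` decreasing to `0` with the separation properties (1) and (2),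
the sets `V_t = {β : ∃ α ∈ ⟨α₁,…,α_t⟩_{M_t}, ‖α - β‖ < δ_t}` satisfy
`⋃_k ⋂_{t ≥ k} V_t = G`. -/
theorem stmt_11 (G : AddSubgroup (AddCircle (1 : ℝ))) (α : ℕ → AddCircle (1 : ℝ))
    (hα : Set.range α = (G : Set (AddCircle (1 : ℝ))))
    (M : ℕ → ℕ) (hMpos : ∀ t, 0 < M t) (hMmono : Monotone M)
    (δ : ℕ → ℝ) (hδpos : ∀ t, 0 < δ t) (hδanti : Antitone δ)
    (hδ0 : Filter.Tendsto δ Filter.atTop (nhds 0))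
    (h1 : ∀ t, ∀ a ∈ spanM α t (M t), ∀ a' ∈ spanM α t (M t),
      a ≠ a' → 2 * δ t < ‖a - a'‖)
    (h2 : ∀ t, ∀ a ∈ spanM α t (M t),
      ∀ a' ∈ spanM α (t + 1) (M (t + 1)) \ spanM α t (M t),
        δ t + δ (t + 1) < ‖a - a'‖)
    (V : ℕ → Set (AddCircle (1 : ℝ)))
    (hV : ∀ t, V t = {β | ∃ a ∈ spanM α t (M t), ‖a - β‖ < δ t}) :
    (⋃ k : ℕ, ⋂ t : ℕ, ⋂ _ : k ≤ t, V t) = (G : Set (AddCircle (1 : ℝ))) :=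
  stmt_11_general G α hα M hMpos δ hδpos hδanti hδ0 h1 h2 V hV
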